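/- 2n+1 is the largest integer m such that there exists a partition of [m] into n+1 blocks that is non-crossing and has no block containing two consecutive integers. -/

import Mathlib

open scoped Classical

def SameBlock {m : ℕ} (P : Finpartition (Finset.Icc 1 m)) (a b : ℕ) : Prop :=
  ∃ B ∈ P.parts, a ∈ B ∧ b ∈ B

def NonCrossing {m : ℕ} (P : Finpartition (Finset.Icc 1 m)) : Prop :=
  ∀ a b c d : ℕ, a < b → b < c → c < d → SameBlock P a c → SameBlock P b d →
    SameBlock P a b

def NoConsec {m : ℕ} (P : Finpartition (Finset.Icc 1 m)) : Prop :=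
  ∀ i : ℕ, ¬ SameBlock P i (i + 1)

def SpecialPartition (n : ℕ) (P : Finpartition (Finset.Icc 1 (2 * n + 1))) : Prop :=
  NonCrossing P ∧ NoConsec P ∧ P.parts.card = n + 1

def InS (n : ℕ) (s : ℕ → ℕ) : Prop :=
  (∀ i, 1 ≤ i → i ≤ n → 1 ≤ s i ∧ s i ≤ i) ∧
  (∀ i j r, 1 ≤ i → i ≤ n → s i = j → 1 ≤ r → r ≤ j - 1 → s (i - r) ≤ j - r)

noncomputable def gap {m : ℕ} (P : Finpartition (Finset.Icc 1 m)) (i : ℕ) : ℕ :=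
  sInf {b | i < b ∧ SameBlock P i b} - i

noncomputable def aSeq (n : ℕ) (P : Finpartition (Finset.Icc 1 (2 * n + 1)))
    (j : ℕ) : ℕ :=
  ((((Finset.Icc 1 (2 * n + 1)).filter (fun i => gap P i ≠ 0)).sort (· ≤ ·)).getD
    (n - j) 0) / 2

/-! The blocks `{k, 2n + 2 - k}`, `1 ≤ k ≤ n + 1`, are nested, so they form a non-crossing
partition of `[2n + 1]` into `n + 1` blocks, none containing two consecutive integers.

Conversely, let `P` be such a partition of `[m]`. If `a` is not the largest element of its block,
then `a + 1` is the smallest element of its block: a smaller `y` in the block of `a + 1` would give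
`y < a < a + 1 < b` with `b` in the block of `a`, so by non-crossing `a` and `a + 1` would share a
block. Hence `a ↦ a + 1` sends the non-maximal elements injectively to block minima other
than `1`, and `m ≤ #maxima + (#minima - 1) ≤ 2 #P.parts - 1`. -/

open Finset

lemma Finpartition.card_le_card_parts_of_subset {α : Type*} [DecidableEq α] {s T : Finset α}
    (P : Finpartition s) (hT : T ⊆ s) (h : ∀ a ∈ T, ∀ b ∈ T, b ∈ P.part a → a = b) :
    #T ≤ #P.parts :=
  card_le_card_of_injOn P.part (fun _ ha => P.part_mem.2 (hT ha))
    fun a ha b hb hab => h a ha b hb (hab ▸ P.mem_part_self.2 (hT hb))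

section SameBlock

variable {m : ℕ} {P : Finpartition (Icc 1 m)} {a b c : ℕ}

lemma sameBlock_iff_mem_part : SameBlock P a b ↔ b ∈ P.part a := by
  rw [Finpartition.mem_part_iff_exists]
  exact exists_congr fun B => and_congr_right fun _ => and_comm

lemma SameBlock.symm (h : SameBlock P a b) : SameBlock P b a := by
  obtain ⟨B, hB, ha, hb⟩ := h
  exact ⟨B, hB, hb, ha⟩

lemma SameBlock.trans (hab : SameBlock P a b) (hbc : SameBlock P b c) : SameBlock P a c := by
  obtain ⟨B, hB, ha, hb⟩ := hab
  obtain ⟨C, hC, hb', hc⟩ := hbc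
  obtain rfl := P.eq_of_mem_parts hB hC hb hb'
  exact ⟨B, hB, ha, hc⟩

lemma SameBlock.mem_right (h : SameBlock P a b) : b ∈ Icc 1 m := by
  obtain ⟨B, hB, -, hb⟩ := h
  exact P.le hB hb

end SameBlock

section UpperBound

variable {m : ℕ} (P : Finpartition (Icc 1 m))

noncomputable def blockMaxima : Finset ℕ := {a ∈ Icc 1 m | ∀ b, SameBlock P a b → b ≤ a}

noncomputable def blockMinima : Finset ℕ := {a ∈ Icc 1 m | ∀ b, SameBlock P a b → a ≤ b}

lemma card_blockMaxima_le : #(blockMaxima P) ≤ #P.parts := by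
  refine P.card_le_card_parts_of_subset (filter_subset _ _) fun a ha b hb hab => ?_
  have hsame := sameBlock_iff_mem_part.2 hab
  exact le_antisymm ((mem_filter.1 hb).2 a hsame.symm) ((mem_filter.1 ha).2 b hsame)

lemma card_blockMinima_le : #(blockMinima P) ≤ #P.parts := by
  refine P.card_le_card_parts_of_subset (filter_subset _ _) fun a ha b hb hab => ?_
  have hsame := sameBlock_iff_mem_part.2 hab
  exact le_antisymm ((mem_filter.1 ha).2 b hsame) ((mem_filter.1 hb).2 a hsame.symm)

lemma one_mem_blockMinima (hm : 0 < m) : 1 ∈ blockMinima P :=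
  mem_filter.2 ⟨mem_Icc.2 ⟨le_rfl, hm⟩, fun _ hb => (mem_Icc.1 hb.mem_right).1⟩

variable {P}

lemma succ_mem_blockMinima (hnc : NonCrossing P) (hcons : NoConsec P) {a b : ℕ} (hab : a < b)
    (hsame : SameBlock P a b) : a + 1 ∈ blockMinima P := by
  have hb := mem_Icc.1 hsame.mem_right
  refine mem_filter.2 ⟨mem_Icc.2 ⟨by omega, by omega⟩, fun y hy => ?_⟩
  by_contra! hya
  rcases (Nat.lt_succ_iff.1 hya).eq_or_lt with rfl | hy_lt
  · exact hcons y hy.symm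
  have hne : a + 1 ≠ b := by rintro rfl; exact hcons a hsame
  have hsucc : SameBlock P y a := hnc y a (a + 1) b hy_lt a.lt_succ_self (by omega) hy.symm hsame
  exact hcons a (hsucc.symm.trans hy.symm)

theorem le_two_mul_card_parts_sub_one (hnc : NonCrossing P) (hcons : NoConsec P) :
    m ≤ 2 * #P.parts - 1 := by
  rcases Nat.eq_zero_or_pos m with rfl | hm
  · exact Nat.zero_le _
  have hnonmax : #(Icc 1 m \ blockMaxima P) ≤ #((blockMinima P).erase 1) := by
    refine card_le_card_of_injOn (· + 1) (fun a ha => ?_) fun a _ b _ h => Nat.succ_injective h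
    obtain ⟨ha, hmax⟩ := mem_sdiff.1 ha
    simp only [blockMaxima, mem_filter, ha, true_and, not_forall, not_le] at hmax
    obtain ⟨b, hsame, hab⟩ := hmax
    have ha1 := (mem_Icc.1 ha).1
    show a + 1 ∈ _
    exact mem_erase.2 ⟨by omega, succ_mem_blockMinima hnc hcons hab hsame⟩
  have hmax := card_blockMaxima_le P
  have hmin := card_blockMinima_le P
  have hsub : blockMaxima P ⊆ Icc 1 m := filter_subset _ _
  have hcard := card_sdiff_add_card_eq_card hsub
  rw [Nat.card_Icc, Nat.add_sub_cancel] at hcard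
  rw [card_erase_of_mem (one_mem_blockMinima P hm)] at hnonmax
  omega

end UpperBound

section Construction

lemma mem_mirrorPair {n k x : ℕ} :
    x ∈ ({k, 2 * n + 2 - k} : Finset ℕ) ↔ x = k ∨ x = 2 * n + 2 - k := by
  simp

variable (n : ℕ)

def mirrorPairs : Finpartition (Icc 1 (2 * n + 1)) where
  parts := (Icc 1 (n + 1)).image fun k => {k, 2 * n + 2 - k}
  supIndep := by
    rw [supIndep_iff_pairwiseDisjoint]
    rintro _ hB _ hC hne
    simp only [coe_image, Set.mem_image, mem_coe, mem_Icc] at hB hC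
    obtain ⟨k, hk, rfl⟩ := hB
    obtain ⟨j, hj, rfl⟩ := hC
    have hkj : k ≠ j := by rintro rfl; exact hne rfl
    refine disjoint_left.2 fun x hx hx' => ?_
    rw [id, mem_mirrorPair] at hx hx'
    omega
  sup_parts := by
    ext x
    simp only [mem_sup, mem_image, mem_Icc, id]
    constructor
    · rintro ⟨_, ⟨k, hk, rfl⟩, hx⟩
      rw [mem_mirrorPair] at hx
      omega
    · intro hx
      by_cases h : x ≤ n + 1
      · exact ⟨_, ⟨x, ⟨hx.1, h⟩, rfl⟩, mem_mirrorPair.2 (Or.inl rfl)⟩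
      · exact ⟨_, ⟨2 * n + 2 - x, by omega, rfl⟩, mem_mirrorPair.2 (Or.inr (by omega))⟩
  bot_notMem := by
    simp only [bot_eq_empty, mem_image]
    rintro ⟨k, -, h⟩
    exact notMem_empty k (h ▸ mem_mirrorPair.2 (Or.inl rfl))

variable {n}

lemma SameBlock.eq_or_add_eq_of_mirrorPairs {a b : ℕ} (h : SameBlock (mirrorPairs n) a b) :
    a = b ∨ a + b = 2 * n + 2 := by
  obtain ⟨_, hB, ha, hb⟩ := h
  obtain ⟨k, hk, rfl⟩ := mem_image.1 hB
  rw [mem_Icc] at hk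
  rw [mem_mirrorPair] at ha hb
  omega

variable (n)

lemma card_parts_mirrorPairs : #(mirrorPairs n).parts = n + 1 := by
  have hinj : Set.InjOn (fun k => ({k, 2 * n + 2 - k} : Finset ℕ)) (Icc 1 (n + 1)) := by
    intro k hk j hj h
    rw [mem_coe, mem_Icc] at hk hj
    have hkj : k ∈ ({j, 2 * n + 2 - j} : Finset ℕ) := by
      simp only at h
      exact h ▸ mem_mirrorPair.2 (Or.inl rfl)
    rw [mem_mirrorPair] at hkj
    omega
  rw [mirrorPairs, card_image_of_injOn hinj, Nat.card_Icc]
  omega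

lemma nonCrossing_mirrorPairs : NonCrossing (mirrorPairs n) := by
  intro a b c d hab hbc hcd hac hbd
  have := hac.eq_or_add_eq_of_mirrorPairs
  have := hbd.eq_or_add_eq_of_mirrorPairs
  omega

lemma noConsec_mirrorPairs : NoConsec (mirrorPairs n) := by
  intro i hi
  have := hi.eq_or_add_eq_of_mirrorPairs
  omega

end Construction

theorem stmt8 (n : ℕ) :
    IsGreatest {m : ℕ | ∃ P : Finpartition (Finset.Icc 1 m),
      NonCrossing P ∧ NoConsec P ∧ P.parts.card = n + 1} (2 * n + 1) := by
  refine ⟨⟨mirrorPairs n, nonCrossing_mirrorPairs n, noConsec_mirrorPairs n,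
    card_parts_mirrorPairs n⟩, ?_⟩
  rintro m ⟨P, hnc, hcons, hcard⟩
  have := le_two_mul_card_parts_sub_one hnc hcons
  omega
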